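/- arXiv:0807.0240 — 2 statements merged into one kernel-verified Lean document; each statement's English description precedes it below -/
import Mathlib

section
/- Let q be a prime power and d ≥ 1. There exists a character χ of 𝔽_{q^{2d}}^× that is regular (i.e., its 2d Galois conjugates χ, χ^q, ..., χ^{q^{2d-1}} over 𝔽_q are pairwise distinct) and satisfies χ^{q^d} = χ^{-1} (i.e., χ is conjugate-selfdual with respect to the extension 𝔽_{q^{2d}}/𝔽_{q^d}). -/
/-!
Take a character `χ` of `𝔽_{q^{2d}}ˣ` of exact order `q^d + 1`, which exists because
`q^d + 1` divides `q^{2d} - 1` and the character group of a cyclic group is cyclic of the same order.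
Then `χ^{q^d} = χ⁻¹` is immediate, and `χ^{q^i} = χ^{q^j}` would mean `q^{j-i} ≡ 1 [MOD q^d + 1]`.
This is impossible for `0 < k < 2d`: for `k ≤ d` the power `q^k` lies strictly between `1` and
`q^d + 1`, and for `k = d + m` it is `≡ -q^m`, with `0 < q^m + 1 < q^d + 1`.
-/

theorem Nat.not_pow_modEq_one_of_lt_two_mul {q d k : ℕ} (hq : 2 ≤ q) (hk₀ : 0 < k)
    (hk : k < 2 * d) : ¬ q ^ k ≡ 1 [MOD q ^ d + 1] := by
  intro h
  rcases le_or_gt k d with hkd | hdk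
  · have hlt : q ^ k < q ^ d + 1 := Nat.lt_succ_of_le (Nat.pow_le_pow_right (by omega) hkd)
    have hgt : 1 < q ^ k := Nat.one_lt_pow hk₀.ne' (by omega)
    rw [Nat.ModEq, Nat.mod_eq_of_lt hlt, Nat.mod_eq_of_lt (by omega)] at h
    omega
  · obtain ⟨m, rfl⟩ : ∃ m, k = d + m := ⟨k - d, by omega⟩
    have hzero : q ^ (d + m) + q ^ m ≡ 0 [MOD q ^ d + 1] :=
      Nat.modEq_zero_iff_dvd.2 ⟨q ^ m, by ring⟩
    have hdvd : q ^ d + 1 ∣ q ^ m + 1 := by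
      rw [← Nat.modEq_zero_iff_dvd, add_comm (q ^ m)]
      exact (h.add_right (q ^ m)).symm.trans hzero
    have hle := Nat.le_of_dvd (by positivity) hdvd
    have hlt : q ^ m < q ^ d := Nat.pow_lt_pow_right (by omega) (by omega)
    omega

theorem Nat.not_pow_modEq_pow_of_lt_two_mul {q d i j : ℕ} (hq : 2 ≤ q) (hij : i < j)
    (hj : j < 2 * d) : ¬ q ^ i ≡ q ^ j [MOD q ^ d + 1] := by
  intro h
  have hcop : Nat.Coprime (q ^ d + 1) (q ^ i) := by
    have hcop_pow : Nat.Coprime (q ^ d + 1) (q ^ d) := by simp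
    exact (hcop_pow.coprime_dvd_right (dvd_pow_self q (by omega))).pow_right i
  rw [← mul_one (q ^ i), show j = i + (j - i) by omega, pow_add] at h
  exact Nat.not_pow_modEq_one_of_lt_two_mul hq (by omega) (by omega)
    (Nat.ModEq.cancel_left_of_coprime hcop h).symm

theorem MonoidHom.comp_powMonoidHom {G H : Type*} [CommMonoid G] [CommMonoid H] (χ : G →* H)
    (m : ℕ) : χ.comp (powMonoidHom m) = χ ^ m := by
  ext
  simp

theorem pow_eq_inv_of_orderOf_eq_add_one {G : Type*} [Group G] {g : G} {m : ℕ}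
    (h : orderOf g = m + 1) : g ^ m = g⁻¹ :=
  eq_inv_of_mul_eq_one_left (by rw [← pow_succ, ← h, pow_orderOf_eq_one])

theorem FiniteField.exists_unitsHom_complex_orderOf_eq (F : Type*) [Field F] [Fintype F] {n : ℕ}
    (h : n ∣ Fintype.card F - 1) : ∃ χ : Fˣ →* ℂˣ, orderOf χ = n := by
  have hn : n ≠ 0 := by
    rintro rfl
    have := Fintype.one_lt_card (α := F)
    rw [zero_dvd_iff] at h
    omega
  obtain ⟨χ, hχ⟩ := MulChar.exists_mulChar_orderOf F h (Complex.isPrimitiveRoot_exp n hn)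
  exact ⟨MulChar.mulEquivToUnitHom χ, by rw [MulEquiv.orderOf_eq, hχ]⟩

theorem stmt8_general (d : ℕ) (q : ℕ)
    (K : Type*) [Field K] [Fintype K] (hK : Fintype.card K = q ^ (2 * d)) :
    ∃ χ : Kˣ →* ℂˣ,
      (∀ i j : ℕ, i < j → j < 2 * d →
        χ.comp (powMonoidHom (q ^ i)) ≠ χ.comp (powMonoidHom (q ^ j))) ∧
      χ.comp (powMonoidHom (q ^ d)) = χ⁻¹ := by
  have hcard : 1 < q ^ (2 * d) := hK ▸ Fintype.one_lt_card
  have hd : 2 * d ≠ 0 := by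
    rintro h
    simp [h] at hcard
  have hq : 2 ≤ q := (Nat.one_lt_pow_iff hd).1 hcard
  have hdvd : q ^ d + 1 ∣ Fintype.card K - 1 :=
    ⟨q ^ d - 1, by rw [hK, pow_mul', ← Nat.sq_sub_sq, one_pow]⟩
  obtain ⟨χ, hχ⟩ := FiniteField.exists_unitsHom_complex_orderOf_eq K hdvd
  refine ⟨χ, fun i j hij hj => ?_, ?_⟩
  · rw [χ.comp_powMonoidHom, χ.comp_powMonoidHom, Ne, pow_eq_pow_iff_modEq (G := Kˣ →* ℂˣ), hχ]
    exact Nat.not_pow_modEq_pow_of_lt_two_mul hq hij hj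
  · rw [χ.comp_powMonoidHom]
    exact pow_eq_inv_of_orderOf_eq_add_one hχ

/-- for a prime power q and d ≥ 1, there is a regular character χ of the
units of a field with q^{2d} elements (its 2d Frobenius conjugates χ^{q^i} are pairwise
distinct) which is conjugate-selfdual: χ^{q^d} = χ⁻¹. -/
theorem stmt8 (p n d : ℕ) (hp : p.Prime) (hn : 0 < n) (hd : 1 ≤ d)
    (q : ℕ) (hq : q = p ^ n)
    (K : Type*) [Field K] [Fintype K] (hK : Fintype.card K = q ^ (2 * d)) :
    ∃ χ : Kˣ →* ℂˣ,
      (∀ i j : ℕ, i < j → j < 2 * d →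
        χ.comp (powMonoidHom (q ^ i)) ≠ χ.comp (powMonoidHom (q ^ j))) ∧
      χ.comp (powMonoidHom (q ^ d)) = χ⁻¹ :=
  stmt8_general d q K hK
end

section
/- Let G be a finite group with an irreducible selfdual representation π, and suppose π has some subgroup K ≤ G such that the restriction of π to K contains an irreducible selfdual representation τ of K with multiplicity one. Then π is orthogonal if and only if τ is orthogonal, and π is symplectic if and only if τ is symplectic. -/
open Module LinearMap

/-- A representation is irreducible: the space is nonzero and the only invariant
submodules are trivial. -/
def RepIrreducible {G V : Type*} [Group G] [AddCommGroup V] [Module ℂ V]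
    (ρ : Representation ℂ G V) : Prop :=
  (∃ v : V, v ≠ 0) ∧
    ∀ U : Submodule ℂ V, (∀ (g : G), ∀ v ∈ U, ρ g v ∈ U) → U = ⊥ ∨ U = ⊤

/-- A representation is selfdual: it is equivariantly isomorphic to its contragredient. -/
def RepSelfdual {G V : Type*} [Group G] [AddCommGroup V] [Module ℂ V]
    (ρ : Representation ℂ G V) : Prop :=
  ∃ e : V ≃ₗ[ℂ] Module.Dual ℂ V, ∀ g v, e (ρ g v) = ρ.dual g (e v)

/-- A bilinear form is invariant under a representation. -/
def InvariantBilin {G V : Type*} [Group G] [AddCommGroup V] [Module ℂ V]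
    (ρ : Representation ℂ G V) (B : LinearMap.BilinForm ℂ V) : Prop :=
  ∀ (g : G) (v w : V), B (ρ g v) (ρ g w) = B v w

/-!
A nonzero `G`-invariant form `B` on `V` pulls back along the multiplicity-one embedding
`Φ₀ : W → V` to a `K`-invariant form on `W` with the same symmetry; the point is that the
pullback is nonzero. Identifying `W` with its dual, `B` yields a `K`-map `A : V → W` adjoint to
`Φ₀`; it is nonzero because `B` is nondegenerate, hence surjective. Averaging over `K` splits `A`
by a `K`-map `W → V`, which by multiplicity one is a multiple of `Φ₀`, so `A ∘ Φ₀ ≠ 0`, i.e.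
`B (Φ₀ x) (Φ₀ y) ≠ 0` for some `x, y`. By Schur's lemma an invariant form on an irreducible
representation is unique up to a scalar, so it satisfies `B v w = ε * B w v` for an `ε`
depending only on the representation, and the pullback shows that these signs agree for `π`
and `τ`.
-/

open Representation

namespace Representation

variable {k G V W : Type*} [Group G] [Fintype G] [AddCommGroup V] [AddCommGroup W]

theorem IsIntertwiningMap.comp_averageMap_linHom [CommRing k] [Invertible (Fintype.card G : k)]
    [Module k V] [Module k W] {ρ : Representation k G V} {σ : Representation k G W}
    {A : V →ₗ[k] W} (hA : ρ.IsIntertwiningMap σ A) (f : W →ₗ[k] V) :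
    A ∘ₗ averageMap (linHom σ ρ) f = averageMap (linHom σ σ) (A ∘ₗ f) := by
  ext w
  simp [GroupAlgebra.average, map_sum, linHom_apply, hA.isIntertwining]

theorem IsIntertwiningMap.exists_rightInverse [Field k] [Invertible (Fintype.card G : k)]
    [Module k V] [Module k W] {ρ : Representation k G V} {σ : Representation k G W}
    {A : V →ₗ[k] W} (hA : ρ.IsIntertwiningMap σ A) (hsurj : Function.Surjective A) :
    ∃ s : W →ₗ[k] V, σ.IsIntertwiningMap ρ s ∧ A ∘ₗ s = LinearMap.id := by
  obtain ⟨s₀, hs₀⟩ := A.exists_rightInverse_of_surjective (LinearMap.range_eq_top.2 hsurj)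
  refine ⟨averageMap (linHom σ ρ) s₀,
    (mem_linHom_invariants_iff_isIntertwining _).1 (averageMap_invariant (linHom σ ρ) s₀), ?_⟩
  rw [hA.comp_averageMap_linHom, hs₀]
  exact averageMap_id _ _ fun g => by ext; simp [linHom_apply]

end Representation

section

variable {G V : Type*} [Group G] [AddCommGroup V] [Module ℂ V] {ρ : Representation ℂ G V}

theorem RepIrreducible.isIrreducible (h : RepIrreducible ρ) : ρ.IsIrreducible := by
  obtain ⟨⟨v, hv⟩, hsub⟩ := h
  refine { exists_pair_ne := ⟨⊥, ⊤, fun hbot => hv ?_⟩, eq_bot_or_eq_top := fun U => ?_ }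
  · have : v ∈ (⊤ : Subrepresentation ρ) := Submodule.mem_top
    rwa [← hbot] at this
  · exact (hsub U.toSubmodule U.apply_mem_toSubmodule).imp
      (fun h => Subrepresentation.toSubmodule_injective h)
      (fun h => Subrepresentation.toSubmodule_injective h)

theorem invariantBilin_iff_isIntertwiningMap (B : LinearMap.BilinForm ℂ V) :
    InvariantBilin ρ B ↔ ρ.IsIntertwiningMap ρ.dual B := by
  refine ⟨fun h => ⟨fun g v => ext fun w => ?_⟩, fun h g v w => ?_⟩
  · simpa [dual_apply, Dual.transpose_apply] using h g v (ρ g⁻¹ w)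
  · simp [h.isIntertwining, dual_apply, Dual.transpose_apply]

namespace InvariantBilin

variable {B B₁ B₂ : LinearMap.BilinForm ℂ V} {W : Type*} [AddCommGroup W] [Module ℂ W]
  {τ : Representation ℂ G W}

def toIntertwiningMap (h : InvariantBilin ρ B) : ρ.IntertwiningMap ρ.dual :=
  B.intertwiningMap_of_isIntertwiningMap ρ ρ.dual
    ((invariantBilin_iff_isIntertwiningMap B).1 h).isIntertwining

@[simp]
theorem coe_toIntertwiningMap (h : InvariantBilin ρ B) : ⇑h.toIntertwiningMap = B := rfl

theorem flip (h : InvariantBilin ρ B) : InvariantBilin ρ B.flip := fun g v w => h g w v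

theorem injective [ρ.IsIrreducible] (h : InvariantBilin ρ B) (hB : B ≠ 0) :
    Function.Injective B :=
  (IsIrreducible.injective_or_eq_zero h.toIntertwiningMap).resolve_right
    fun h0 => hB congr(($h0).toLinearMap)

theorem separatingRight [ρ.IsIrreducible] (h : InvariantBilin ρ B) (hB : B ≠ 0) :
    B.SeparatingRight :=
  flip_separatingLeft.1 <| separatingLeft_iff_ker_eq_bot.2 <| ker_eq_bot.2 <|
    h.flip.injective fun h0 => hB (flip_inj (h0.trans rfl))

theorem exists_eq_smul [FiniteDimensional ℂ V] [ρ.IsIrreducible] (h₁ : InvariantBilin ρ B₁)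
    (hB₁ : B₁ ≠ 0) (h₂ : InvariantBilin ρ B₂) : ∃ c : ℂ, B₂ = c • B₁ := by
  have hinj := h₁.injective hB₁
  let e := h₁.toIntertwiningMap.ofBijective ⟨hinj,
    (injective_iff_surjective_of_finrank_eq_finrank Subspace.dual_finrank_eq.symm).1 hinj⟩
  obtain ⟨c, hc⟩ := IsIrreducible.algebraMap_intertwiningMap_bijective_of_isAlgClosed.2
    (e.symm.toIntertwiningMap.comp h₂.toIntertwiningMap)
  refine ⟨c, ext fun v => ?_⟩
  have hv : e.symm (B₂ v) = c • v := by simpa using congr($hc.symm v)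
  calc B₂ v = e (e.symm (B₂ v)) := (e.apply_symm_apply _).symm
    _ = (c • B₁) v := by rw [hv, map_smul]; rfl

theorem exists_eq_mul_swap [FiniteDimensional ℂ V] [ρ.IsIrreducible] (h : InvariantBilin ρ B)
    (hB : B ≠ 0) : ∃ ε : ℂ, ∀ v w, B v w = ε * B w v := by
  obtain ⟨ε, hε⟩ := h.exists_eq_smul hB h.flip
  exact ⟨ε, fun v w => by simpa using congr($hε w v)⟩

theorem eq_of_eq_mul_swap [FiniteDimensional ℂ V] [ρ.IsIrreducible] (h₁ : InvariantBilin ρ B₁)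
    (hB₁ : B₁ ≠ 0) (h₂ : InvariantBilin ρ B₂) (hB₂ : B₂ ≠ 0) {ε δ : ℂ}
    (hε : ∀ v w, B₁ v w = ε * B₁ w v) (hδ : ∀ v w, B₂ v w = δ * B₂ w v) : ε = δ := by
  obtain ⟨c, rfl⟩ := h₁.exists_eq_smul hB₁ h₂
  obtain ⟨v, w, hvw⟩ : ∃ v w, (c • B₁) w v ≠ 0 := by
    by_contra! h
    exact hB₂ (ext₂ fun w v => h v w)
  refine mul_right_cancel₀ hvw ?_
  calc ε * (c • B₁) w v = (c • B₁) v w := by simp [hε v w]; ring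
    _ = δ * (c • B₁) w v := hδ v w

theorem comp {H : Type*} [Group H] (h : InvariantBilin ρ B) (f : H →* G) :
    InvariantBilin (ρ.comp f) B := fun k => h (f k)

theorem compl₁₂ (h : InvariantBilin ρ B) {Φ : W →ₗ[ℂ] V} (hΦ : τ.IsIntertwiningMap ρ Φ) :
    InvariantBilin τ (B.compl₁₂ Φ Φ) :=
  fun k x y => by simp [hΦ.isIntertwining, h k]

theorem isIntertwiningMap_compl₂ (h : InvariantBilin ρ B) {Φ : W →ₗ[ℂ] V}
    (hΦ : τ.IsIntertwiningMap ρ Φ) : ρ.IsIntertwiningMap τ.dual (B.compl₂ Φ) :=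
  ⟨fun k v => ext fun x => by
    simp [dual_apply, Dual.transpose_apply, hΦ.isIntertwining, ← h k v]⟩

end InvariantBilin

theorem RepSelfdual.exists_invariantBilin [Nontrivial V] (h : RepSelfdual ρ) :
    ∃ B : LinearMap.BilinForm ℂ V, B ≠ 0 ∧ InvariantBilin ρ B := by
  obtain ⟨e, he⟩ := h
  refine ⟨e.toLinearMap, fun h0 => ?_, (invariantBilin_iff_isIntertwiningMap _).2 ⟨he⟩⟩
  obtain ⟨v, hv⟩ := exists_ne (0 : V)
  exact hv (e.injective (by simpa using congr($h0 v)))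

end

section MultiplicityOne

variable {K V W : Type*} [Group K] [Finite K] [AddCommGroup V] [Module ℂ V]
  [AddCommGroup W] [Module ℂ W] {ρ : Representation ℂ K V} {τ : Representation ℂ K W}

theorem compl₁₂_ne_zero_of_multiplicity_one [τ.IsIrreducible] (hτ : RepSelfdual τ)
    {Φ₀ : W →ₗ[ℂ] V} (hΦ₀ : τ.IsIntertwiningMap ρ Φ₀) (hΦ₀_ne : Φ₀ ≠ 0)
    (hmult : ∀ Φ : W →ₗ[ℂ] V, τ.IsIntertwiningMap ρ Φ → ∃ c : ℂ, Φ = c • Φ₀)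
    {B : LinearMap.BilinForm ℂ V} (hB : InvariantBilin ρ B) (hB_sep : B.SeparatingRight) :
    B.compl₁₂ Φ₀ Φ₀ ≠ 0 := by
  obtain ⟨e, he⟩ := hτ
  let eτ : τ.Equiv τ.dual := .mk e fun k => ext (he k)
  let A : ρ.IntertwiningMap τ := eτ.symm.toIntertwiningMap.comp
    ((B.compl₂ Φ₀).intertwiningMap_of_isIntertwiningMap _ _
      (hB.isIntertwiningMap_compl₂ hΦ₀).isIntertwining)
  have hA (v : V) (x : W) : e (A v) x = B v (Φ₀ x) := by simp [A, eτ]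
  obtain ⟨x, hx⟩ : ∃ x, Φ₀ x ≠ 0 := by
    by_contra! h
    exact hΦ₀_ne (ext h)
  have hA_surj : Function.Surjective A := by
    refine (IsIrreducible.surjective_or_eq_zero A).resolve_right fun h0 => ?_
    obtain ⟨v, hv⟩ := not_forall.1 fun h' => hx (hB_sep _ h')
    exact hv (by rw [← hA, h0]; simp)
  have := Fintype.ofFinite K
  have : Invertible (Fintype.card K : ℂ) :=
    invertibleOfNonzero (Nat.cast_ne_zero.2 Fintype.card_ne_zero)
  obtain ⟨s, hs, hAs⟩ := IsIntertwiningMap.exists_rightInverse ⟨A.isIntertwining⟩ hA_surj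
  obtain ⟨c, rfl⟩ := hmult s hs
  have hAΦ₀ : A (Φ₀ x) ≠ 0 := fun h0 => by
    have hx' : A (c • Φ₀ x) = x := congr($hAs x)
    rw [map_smul, h0, smul_zero] at hx'
    exact hx (by rw [← hx', map_zero])
  refine fun h0 => hAΦ₀ (e.injective (ext fun y => ?_))
  rw [hA, map_zero]
  exact congr($h0 x y)

theorem exists_invariantBilin_eq_mul_swap_iff {G : Type*} [Group G] {K : Subgroup G} [Finite K]
    [FiniteDimensional ℂ V] [FiniteDimensional ℂ W] {π : Representation ℂ G V}
    {τ : Representation ℂ K W} [π.IsIrreducible] [τ.IsIrreducible]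
    (hπ : RepSelfdual π) (hτ : RepSelfdual τ) {Φ₀ : W →ₗ[ℂ] V}
    (hΦ₀ : τ.IsIntertwiningMap (π.comp K.subtype) Φ₀) (hΦ₀_ne : Φ₀ ≠ 0)
    (hmult : ∀ Φ : W →ₗ[ℂ] V, τ.IsIntertwiningMap (π.comp K.subtype) Φ → ∃ c : ℂ, Φ = c • Φ₀)
    (ε : ℂ) :
    (∃ B : LinearMap.BilinForm ℂ V, B ≠ 0 ∧ InvariantBilin π B ∧ ∀ v w, B v w = ε * B w v) ↔
      ∃ C : LinearMap.BilinForm ℂ W, C ≠ 0 ∧ InvariantBilin τ C ∧ ∀ x y, C x y = ε * C y x := by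
  have pullback {B : LinearMap.BilinForm ℂ V} (hB : B ≠ 0) (h : InvariantBilin π B) :
      B.compl₁₂ Φ₀ Φ₀ ≠ 0 ∧ InvariantBilin τ (B.compl₁₂ Φ₀ Φ₀) :=
    ⟨compl₁₂_ne_zero_of_multiplicity_one hτ hΦ₀ hΦ₀_ne hmult (h.comp K.subtype)
      (h.separatingRight hB), (h.comp K.subtype).compl₁₂ hΦ₀⟩
  have : Nontrivial V := IsSimpleModule.nontrivial (MonoidAlgebra ℂ G) π.asModule
  obtain ⟨B₀, hB₀, hB₀_inv⟩ := hπ.exists_invariantBilin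
  obtain ⟨ε₀, hε₀⟩ := hB₀_inv.exists_eq_mul_swap hB₀
  constructor
  · rintro ⟨B, hB, hB_inv, hε⟩
    exact ⟨_, (pullback hB hB_inv).1, (pullback hB hB_inv).2, fun x y => hε _ _⟩
  · rintro ⟨C, hC, hC_inv, hε⟩
    obtain ⟨hC₀, hC₀_inv⟩ := pullback hB₀ hB₀_inv
    obtain rfl : ε₀ = ε := hC₀_inv.eq_of_eq_mul_swap hC₀ hC_inv hC (fun x y => hε₀ _ _) hε
    exact ⟨B₀, hB₀, hB₀_inv, hε₀⟩

end MultiplicityOne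

/-- if an irreducible selfdual representation π of a finite group G
contains, with multiplicity one, an irreducible selfdual representation τ of a subgroup
K upon restriction, then π is orthogonal iff τ is orthogonal, and π is symplectic iff τ
is symplectic. -/
theorem stmt18 {G : Type*} [Group G] [Finite G] (K : Subgroup G)
    {V W : Type*} [AddCommGroup V] [Module ℂ V] [FiniteDimensional ℂ V]
    [AddCommGroup W] [Module ℂ W] [FiniteDimensional ℂ W]
    (π : Representation ℂ G V) (hπirr : RepIrreducible π) (hπsd : RepSelfdual π)
    (τ : Representation ℂ K W) (hτirr : RepIrreducible τ) (hτsd : RepSelfdual τ)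
    (hmult1 : ∃ Φ₀ : W →ₗ[ℂ] V, Φ₀ ≠ 0 ∧
      (∀ (k : K) (x : W), Φ₀ (τ k x) = π (k : G) (Φ₀ x)) ∧
      ∀ Φ : W →ₗ[ℂ] V, (∀ (k : K) (x : W), Φ (τ k x) = π (k : G) (Φ x)) →
        ∃ c : ℂ, Φ = c • Φ₀) :
    ((∃ B : LinearMap.BilinForm ℂ V, B ≠ 0 ∧ InvariantBilin π B ∧
        ∀ v w : V, B v w = B w v) ↔
      (∃ C : LinearMap.BilinForm ℂ W, C ≠ 0 ∧ InvariantBilin τ C ∧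
        ∀ x y : W, C x y = C y x)) ∧
    ((∃ B : LinearMap.BilinForm ℂ V, B ≠ 0 ∧ InvariantBilin π B ∧
        ∀ v w : V, B v w = - B w v) ↔
      (∃ C : LinearMap.BilinForm ℂ W, C ≠ 0 ∧ InvariantBilin τ C ∧
        ∀ x y : W, C x y = - C y x)) := by
  obtain ⟨Φ₀, hΦ₀_ne, hΦ₀, hmult⟩ := hmult1
  have := hπirr.isIrreducible
  have := hτirr.isIrreducible
  have key := exists_invariantBilin_eq_mul_swap_iff hπsd hτsd ⟨hΦ₀⟩ hΦ₀_ne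
    fun Φ hΦ => hmult Φ hΦ.isIntertwining
  exact ⟨by simpa using key 1, by simpa using key (-1)⟩
end
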